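/- There exists a constant c(L) depending only on L such that the following holds. Let X be a centered random vector in ℝ^d satisfying the L₄–L₂ norm equivalence with constant L, with covariance Σ = 𝔼(X⊗X). For α > 0, let X̃ = X·1_{‖X‖₂ ≤ α} and Σ̃ = 𝔼(X̃⊗X̃). Then |Tr(Σ̃) − Tr(Σ)| ≤ c(L) Tr(Σ)² / α². -/

import Mathlib

open MeasureTheory ProbabilityTheory
open scoped RealInnerProductSpace

/-- The ℓ₂→ℓ₂ operator norm of a `d × d` real matrix. -/
noncomputable def matOpNorm {d : ℕ} (A : Matrix (Fin d) (Fin d) ℝ) : ℝ :=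
  ‖Matrix.toEuclideanCLM (𝕜 := ℝ) (n := Fin d) A‖

/-- The outer product `z zᵀ` of a vector with itself. -/
noncomputable def outerMat {d : ℕ} (z : EuclideanSpace ℝ (Fin d)) :
    Matrix (Fin d) (Fin d) ℝ := Matrix.of fun i j => z i * z j

/-- Covariance-type matrix `𝔼 (X ⊗ X)` of a random vector. -/
noncomputable def covMat {Ω : Type*} [MeasurableSpace Ω] (P : Measure Ω) {d : ℕ}
    (X : Ω → EuclideanSpace ℝ (Fin d)) : Matrix (Fin d) (Fin d) ℝ :=
  Matrix.of fun i j => ∫ ω, X ω i * X ω j ∂P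

/-- Effective rank `Tr(A)/‖A‖`. -/
noncomputable def effRank {d : ℕ} (A : Matrix (Fin d) (Fin d) ℝ) : ℝ :=
  A.trace / matOpNorm A

/-- The squared weak variance `R_Z² = sup_{u,v ∈ S^{d-1}} 𝔼 (vᵀ (Z⊗Z - 𝔼 Z⊗Z) u)²`. -/
noncomputable def weakVarSq {Ω : Type*} [MeasurableSpace Ω] (P : Measure Ω) {d : ℕ}
    (Z : Ω → EuclideanSpace ℝ (Fin d)) : ℝ :=
  ⨆ p : Metric.sphere (0 : EuclideanSpace ℝ (Fin d)) 1 ×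
        Metric.sphere (0 : EuclideanSpace ℝ (Fin d)) 1,
    ∫ ω, (∑ i, ∑ j,
      (p.2 : EuclideanSpace ℝ (Fin d)) i * (Z ω i * Z ω j - covMat P Z i j) *
      (p.1 : EuclideanSpace ℝ (Fin d)) j) ^ 2 ∂P

/-- The weak variance `R_Z`. -/
noncomputable def weakVar {Ω : Type*} [MeasurableSpace Ω] (P : Measure Ω) {d : ℕ}
    (Z : Ω → EuclideanSpace ℝ (Fin d)) : ℝ :=
  Real.sqrt (weakVarSq P Z)

/-- Truncation `X 1_{‖X‖₂ ≤ α}`. -/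
noncomputable def trunc {Ω : Type*} {d : ℕ} (X : Ω → EuclideanSpace ℝ (Fin d)) (α : ℝ) :
    Ω → EuclideanSpace ℝ (Fin d) := fun ω => if ‖X ω‖ ≤ α then X ω else 0

/-- `X` is a centered random vector. -/
def IsCentered {Ω : Type*} [MeasurableSpace Ω] (P : Measure Ω) {d : ℕ}
    (X : Ω → EuclideanSpace ℝ (Fin d)) : Prop :=
  ∀ i : Fin d, ∫ ω, X ω i ∂P = 0

/-- `X` is `L`-subgaussian: all moments exist and
`(𝔼|⟨X,t⟩|^p)^{1/p} ≤ L √p (𝔼⟨X,t⟩²)^{1/2}` for all `t` and `p ≥ 2`. -/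
def IsLSubgaussian {Ω : Type*} [MeasurableSpace Ω] (P : Measure Ω) {d : ℕ}
    (X : Ω → EuclideanSpace ℝ (Fin d)) (L : ℝ) : Prop :=
  ∀ t : EuclideanSpace ℝ (Fin d), ∀ p : ℝ, 2 ≤ p →
    Integrable (fun ω => |⟪X ω, t⟫| ^ p) P ∧
    (∫ ω, |⟪X ω, t⟫| ^ p ∂P) ^ (1 / p) ≤
      L * Real.sqrt p * (∫ ω, ⟪X ω, t⟫ ^ 2 ∂P) ^ ((1 : ℝ) / 2)

/-- A centered `X` satisfies `L₄-L₂` norm equivalence with constant `L`: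
fourth moments exist and `(𝔼⟨X,t⟩⁴)^{1/4} ≤ L (𝔼⟨X,t⟩²)^{1/2}` for all `t`. -/
def SatisfiesL4L2 {Ω : Type*} [MeasurableSpace Ω] (P : Measure Ω) {d : ℕ}
    (X : Ω → EuclideanSpace ℝ (Fin d)) (L : ℝ) : Prop :=
  ∀ t : EuclideanSpace ℝ (Fin d),
    Integrable (fun ω => ⟪X ω, t⟫ ^ 4) P ∧
    (∫ ω, ⟪X ω, t⟫ ^ 4 ∂P) ^ ((1 : ℝ) / 4) ≤
      L * (∫ ω, ⟪X ω, t⟫ ^ 2 ∂P) ^ ((1 : ℝ) / 2)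

/-- `Xi` is a sequence of independent copies of `X`. -/
def IIDCopies {Ω : Type*} [MeasurableSpace Ω] (P : Measure Ω) {d N : ℕ}
    (X : Ω → EuclideanSpace ℝ (Fin d)) (Xi : Fin N → Ω → EuclideanSpace ℝ (Fin d)) : Prop :=
  (∀ i, Measurable (Xi i)) ∧ iIndepFun Xi P ∧
    ∀ i, Measure.map (Xi i) P = Measure.map X P

/-! Off the event `‖X‖₂ ≤ α` one has `‖X‖₂² ≤ ‖X‖₂⁴ / α²`, so truncation lowers the trace of the
covariance by at most `𝔼‖X‖₂⁴ / α²`. Expanding `‖X‖₂⁴ = ∑ᵢⱼ Xᵢ² Xⱼ²` and applying Cauchy–Schwarz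
to each term gives `𝔼‖X‖₂⁴ ≤ (∑ᵢ (𝔼Xᵢ⁴)^{1/2})²`, and the norm equivalence in the coordinate
directions bounds `(𝔼Xᵢ⁴)^{1/2}` by `L² 𝔼Xᵢ²`; hence `𝔼‖X‖₂⁴ ≤ L⁴ Tr(Σ)²`. -/

lemma sqrt_le_sq_mul_of_rpow_le {a b L : ℝ} (ha : 0 ≤ a) (hb : 0 ≤ b)
    (h : a ^ (1 / 4 : ℝ) ≤ L * b ^ (1 / 2 : ℝ)) : √a ≤ L ^ 2 * b := by
  have hsqrt : √a = (a ^ (1 / 4 : ℝ)) ^ 2 := by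
    rw [← Real.rpow_natCast, ← Real.rpow_mul ha, Real.sqrt_eq_rpow]
    norm_num
  rw [hsqrt, ← Real.sq_sqrt hb, Real.sqrt_eq_rpow, ← mul_pow]
  exact pow_le_pow_left₀ (by positivity) h 2

lemma EuclideanSpace.norm_pow_four_eq {ι : Type*} [Fintype ι] (x : EuclideanSpace ℝ ι) :
    ‖x‖ ^ 4 = ∑ i, ∑ j, x i ^ 2 * x j ^ 2 := by
  rw [show 4 = 2 * 2 from rfl, pow_mul, EuclideanSpace.real_norm_sq_eq, sq, Finset.sum_mul_sum]

section

variable {Ω : Type*}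

section TruncationNorm

variable {d : ℕ} {X : Ω → EuclideanSpace ℝ (Fin d)} {α : ℝ}

lemma norm_trunc (ω : Ω) : ‖trunc X α ω‖ = if ‖X ω‖ ≤ α then ‖X ω‖ else 0 := by
  unfold trunc
  split_ifs <;> simp

lemma norm_trunc_le (ω : Ω) : ‖trunc X α ω‖ ≤ ‖X ω‖ := by
  rw [norm_trunc]
  split_ifs <;> simp

lemma norm_sq_sub_norm_trunc_sq_le (hα : 0 < α) (ω : Ω) :
    ‖X ω‖ ^ 2 - ‖trunc X α ω‖ ^ 2 ≤ ‖X ω‖ ^ 4 / α ^ 2 := by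
  rw [norm_trunc]
  split_ifs with hle
  · simp only [sub_self]
    positivity
  · rw [le_div_iff₀ (by positivity)]
    have : α ^ 2 ≤ ‖X ω‖ ^ 2 := pow_le_pow_left₀ hα.le (not_le.1 hle).le 2
    nlinarith [sq_nonneg ‖X ω‖]

end TruncationNorm

variable [MeasurableSpace Ω] {P : Measure Ω}

section FourthMoments

variable {f g : Ω → ℝ}

lemma memLp_two_sq (hf : AEStronglyMeasurable f P) (hf4 : Integrable (fun ω => f ω ^ 4) P) :
    MemLp (fun ω => f ω ^ 2) 2 P := by
  have hf2 : AEStronglyMeasurable (fun ω => f ω ^ 2) P := hf.pow 2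
  refine (memLp_two_iff_integrable_sq hf2).2 ?_
  simp only [← pow_mul]
  exact hf4

lemma integrable_sq_mul_sq (hf : AEStronglyMeasurable f P) (hg : AEStronglyMeasurable g P)
    (hf4 : Integrable (fun ω => f ω ^ 4) P) (hg4 : Integrable (fun ω => g ω ^ 4) P) :
    Integrable (fun ω => f ω ^ 2 * g ω ^ 2) P :=
  (memLp_two_sq hf hf4).integrable_mul (memLp_two_sq hg hg4)

lemma integral_sq_mul_sq_le (hf : AEStronglyMeasurable f P) (hg : AEStronglyMeasurable g P)
    (hf4 : Integrable (fun ω => f ω ^ 4) P) (hg4 : Integrable (fun ω => g ω ^ 4) P) :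
    ∫ ω, f ω ^ 2 * g ω ^ 2 ∂P ≤ √(∫ ω, f ω ^ 4 ∂P) * √(∫ ω, g ω ^ 4 ∂P) := by
  have rpow_two : ∀ h : Ω → ℝ, (fun ω => (h ω ^ 2) ^ (2 : ℝ)) = fun ω => h ω ^ 4 := fun h => by
    ext ω
    rw [Real.rpow_two, ← pow_mul]
  have := integral_mul_le_Lp_mul_Lq_of_nonneg Real.HolderConjugate.two_two
    (.of_forall fun ω => sq_nonneg (f ω)) (.of_forall fun ω => sq_nonneg (g ω))
    (by simpa using memLp_two_sq hf hf4) (by simpa using memLp_two_sq hg hg4)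
  simpa only [rpow_two, Real.sqrt_eq_rpow] using this

variable {ι : Type*} {X : Ω → EuclideanSpace ℝ ι}

lemma aestronglyMeasurable_apply (hX : AEStronglyMeasurable X P) (i : ι) :
    AEStronglyMeasurable (fun ω => X ω i) P :=
  (EuclideanSpace.proj i).continuous.comp_aestronglyMeasurable hX

variable [Fintype ι]

lemma integrable_norm_pow_four (hX : AEStronglyMeasurable X P)
    (h4 : ∀ i, Integrable (fun ω => X ω i ^ 4) P) : Integrable (fun ω => ‖X ω‖ ^ 4) P := by
  simp_rw [EuclideanSpace.norm_pow_four_eq]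
  exact integrable_finsetSum _ fun i _ => integrable_finsetSum _ fun j _ =>
    integrable_sq_mul_sq (aestronglyMeasurable_apply hX i) (aestronglyMeasurable_apply hX j)
      (h4 i) (h4 j)

lemma integral_norm_pow_four_le (hX : AEStronglyMeasurable X P)
    (h4 : ∀ i, Integrable (fun ω => X ω i ^ 4) P) :
    ∫ ω, ‖X ω‖ ^ 4 ∂P ≤ (∑ i, √(∫ ω, X ω i ^ 4 ∂P)) ^ 2 := by
  have hint : ∀ i j, Integrable (fun ω => X ω i ^ 2 * X ω j ^ 2) P := fun i j =>
    integrable_sq_mul_sq (aestronglyMeasurable_apply hX i) (aestronglyMeasurable_apply hX j)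
      (h4 i) (h4 j)
  calc ∫ ω, ‖X ω‖ ^ 4 ∂P = ∑ i, ∑ j, ∫ ω, X ω i ^ 2 * X ω j ^ 2 ∂P := by
        simp_rw [EuclideanSpace.norm_pow_four_eq]
        rw [integral_finsetSum _ fun i _ => integrable_finsetSum _ fun j _ => hint i j]
        exact Finset.sum_congr rfl fun i _ => integral_finsetSum _ fun j _ => hint i j
    _ ≤ ∑ i, ∑ j, √(∫ ω, X ω i ^ 4 ∂P) * √(∫ ω, X ω j ^ 4 ∂P) := by
        gcongr with i _ j _
        exact integral_sq_mul_sq_le (aestronglyMeasurable_apply hX i)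
          (aestronglyMeasurable_apply hX j) (h4 i) (h4 j)
    _ = _ := by rw [sq, Finset.sum_mul_sum]

end FourthMoments

variable {d : ℕ} {X : Ω → EuclideanSpace ℝ (Fin d)}

lemma trace_covMat : (covMat P X).trace = ∑ i, ∫ ω, X ω i ^ 2 ∂P := by
  simp [Matrix.trace, covMat, sq]

lemma trace_covMat_eq_integral_norm_sq (hX : AEStronglyMeasurable X P)
    (h2 : Integrable (fun ω => ‖X ω‖ ^ 2) P) : (covMat P X).trace = ∫ ω, ‖X ω‖ ^ 2 ∂P := by
  simp_rw [trace_covMat, EuclideanSpace.real_norm_sq_eq]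
  refine (integral_finsetSum _ fun i _ => h2.mono' ((aestronglyMeasurable_apply hX i).pow 2)
    (.of_forall fun ω => ?_)).symm
  rw [Pi.pow_apply, norm_pow]
  exact pow_le_pow_left₀ (norm_nonneg _) (PiLp.norm_apply_le _ _) 2

namespace SatisfiesL4L2

variable {L : ℝ}

lemma integrable_apply_pow_four (h : SatisfiesL4L2 P X L) (i : Fin d) :
    Integrable (fun ω => X ω i ^ 4) P := by
  simpa [EuclideanSpace.inner_single_right] using (h (EuclideanSpace.single i 1)).1

lemma sqrt_integral_apply_pow_four_le (h : SatisfiesL4L2 P X L) (i : Fin d) :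
    √(∫ ω, X ω i ^ 4 ∂P) ≤ L ^ 2 * ∫ ω, X ω i ^ 2 ∂P :=
  sqrt_le_sq_mul_of_rpow_le (integral_nonneg fun _ => by positivity)
    (integral_nonneg fun _ => by positivity)
    (by simpa [EuclideanSpace.inner_single_right] using (h (EuclideanSpace.single i 1)).2)

lemma integral_norm_pow_four_le (h : SatisfiesL4L2 P X L) (hX : AEStronglyMeasurable X P) :
    ∫ ω, ‖X ω‖ ^ 4 ∂P ≤ L ^ 4 * (covMat P X).trace ^ 2 := by
  calc ∫ ω, ‖X ω‖ ^ 4 ∂P ≤ (∑ i, √(∫ ω, X ω i ^ 4 ∂P)) ^ 2 :=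
        _root_.integral_norm_pow_four_le hX h.integrable_apply_pow_four
    _ ≤ (∑ i, L ^ 2 * ∫ ω, X ω i ^ 2 ∂P) ^ 2 := by
        gcongr with i _
        exact h.sqrt_integral_apply_pow_four_le i
    _ = L ^ 4 * (covMat P X).trace ^ 2 := by
        rw [trace_covMat, ← Finset.mul_sum]
        ring

end SatisfiesL4L2

section Truncation

variable {α : ℝ}

lemma measurable_trunc (hX : Measurable X) : Measurable (trunc X α) :=
  Measurable.ite (measurableSet_le hX.norm measurable_const) hX measurable_const

lemma abs_trace_covMat_trunc_sub_le [IsFiniteMeasure P] (hX : Measurable X)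
    (h4 : Integrable (fun ω => ‖X ω‖ ^ 4) P) (hα : 0 < α) :
    |(covMat P (trunc X α)).trace - (covMat P X).trace| ≤ (∫ ω, ‖X ω‖ ^ 4 ∂P) / α ^ 2 := by
  have h2 : Integrable (fun ω => ‖X ω‖ ^ 2) P :=
    (h4.add (integrable_const 1)).mono' (hX.norm.pow_const 2).aestronglyMeasurable
      (.of_forall fun ω => by
        rw [Real.norm_of_nonneg (by positivity)]
        show ‖X ω‖ ^ 2 ≤ ‖X ω‖ ^ 4 + 1
        nlinarith [sq_nonneg (‖X ω‖ ^ 2 - 1)])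
  have h2trunc : Integrable (fun ω => ‖trunc X α ω‖ ^ 2) P :=
    h2.mono' ((measurable_trunc hX).norm.pow_const 2).aestronglyMeasurable
      (.of_forall fun ω => by
        rw [Real.norm_of_nonneg (by positivity)]
        exact pow_le_pow_left₀ (norm_nonneg _) (norm_trunc_le ω) 2)
  rw [trace_covMat_eq_integral_norm_sq hX.aestronglyMeasurable h2,
    trace_covMat_eq_integral_norm_sq (measurable_trunc hX).aestronglyMeasurable h2trunc,
    abs_sub_comm, ← integral_sub h2 h2trunc, ← integral_div,
    abs_of_nonneg (integral_nonneg fun ω => sub_nonneg.2 <|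
      pow_le_pow_left₀ (norm_nonneg _) (norm_trunc_le ω) 2)]
  exact integral_mono (h2.sub h2trunc) (h4.div_const _) (norm_sq_sub_norm_trunc_sq_le hα)

end Truncation

end

/-- For every `L ≥ 1` there is `c(L) > 0` such that for any centered `X` satisfying the
`L₄-L₂` norm equivalence with constant `L` and any truncation level `α > 0`, the covariance
of the truncation `X̃ = X 1_{‖X‖₂ ≤ α}` satisfies `|Tr(Σ̃) - Tr(Σ)| ≤ c(L) Tr(Σ)² / α²`. -/
theorem truncated_cov_trace_bound :
    ∀ L : ℝ, 1 ≤ L → ∃ c : ℝ, 0 < c ∧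
      ∀ (Ω : Type*) [MeasurableSpace Ω] (P : Measure Ω) [IsProbabilityMeasure P]
        (d : ℕ) (X : Ω → EuclideanSpace ℝ (Fin d)),
        Measurable X → IsCentered P X → SatisfiesL4L2 P X L →
        ∀ α : ℝ, 0 < α →
          |(covMat P (trunc X α)).trace - (covMat P X).trace| ≤
            c * (covMat P X).trace ^ 2 / α ^ 2 := by
  intro L hL
  refine ⟨L ^ 4, by positivity, fun Ω _ P _ d X hX _ hL4 α hα => ?_⟩
  calc |(covMat P (trunc X α)).trace - (covMat P X).trace|
      ≤ (∫ ω, ‖X ω‖ ^ 4 ∂P) / α ^ 2 :=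
        abs_trace_covMat_trunc_sub_le hX
          (integrable_norm_pow_four hX.aestronglyMeasurable hL4.integrable_apply_pow_four) hα
    _ ≤ L ^ 4 * (covMat P X).trace ^ 2 / α ^ 2 := by
        gcongr
        exact hL4.integral_norm_pow_four_le hX.aestronglyMeasurable
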